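/- arXiv:2210.14060 — 2 statements merged into one kernel-verified Lean document; each statement's English description precedes it below -/
import Mathlib

section
/- The Jacobian of a finite connected graph G is a finite abelian group whose order equals the number of spanning trees of G. -/
/-- A finite (multi)graph: finite vertex and edge sets, each edge with a
source and target endpoint (orientation is irrelevant; loops allowed). -/
structure FinGraph where
  V : Type
  E : Type
  [fintypeV : Fintype V]
  [fintypeE : Fintype E]
  [decEqV : DecidableEq V]
  s : E → V
  t : E → V

attribute [instance] FinGraph.fintypeV FinGraph.fintypeE FinGraph.decEqV

namespace FinGraph

variable (G : FinGraph)

/-- Two vertices are adjacent if some edge joins them. -/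
def Adj (u v : G.V) : Prop :=
  ∃ e : G.E, (G.s e = u ∧ G.t e = v) ∨ (G.s e = v ∧ G.t e = u)

/-- Vertices in the same connected component. -/
def Reach (u v : G.V) : Prop := Relation.ReflTransGen G.Adj u v

/-- The number of connected components. -/
noncomputable def numComponents : ℕ := Nat.card (Quot G.Reach)

/-- The genus (first Betti number) `e - v + f` as an integer. -/
noncomputable def genus : ℤ :=
  (Fintype.card G.E : ℤ) - (Fintype.card G.V : ℤ) + (G.numComponents : ℤ)

/-- A graph is connected if it is nonempty and any two vertices are joined by a path. -/
def Connected : Prop := Nonempty G.V ∧ ∀ u v : G.V, G.Reach u v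

/-- The valence of a vertex (loops counted twice). -/
def val (v : G.V) : ℕ :=
  (Finset.univ.filter fun e => G.s e = v).card +
  (Finset.univ.filter fun e => G.t e = v).card

/-- The canonical divisor `K(v) = val(v) - 2`. -/
def canonical : G.V → ℤ := fun v => (G.val v : ℤ) - 2

/-- The degree of a divisor: the total number of chips. -/
def deg (D : G.V → ℤ) : ℤ := ∑ v, D v

/-- A divisor is effective if it is nonnegative everywhere. -/
def Effective (D : G.V → ℤ) : Prop := ∀ v, 0 ≤ D v

/-- The principal divisor (Laplacian) associated to `f : V → ℤ`. -/
def divOf (f : G.V → ℤ) : G.V → ℤ := fun v =>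
  ∑ e : G.E,
    ((if G.s e = v then f (G.t e) - f (G.s e) else 0) +
     (if G.t e = v then f (G.s e) - f (G.t e) else 0))

/-- A divisor is principal if it is the Laplacian of some integer function. -/
def Principal (D : G.V → ℤ) : Prop := ∃ f : G.V → ℤ, D = G.divOf f

/-- Linear equivalence of divisors. -/
def LinEquiv (D D' : G.V → ℤ) : Prop := G.Principal (D - D')

/-- A divisor is winnable (has nonempty linear system) if it is linearly
equivalent to an effective divisor. -/
def Winnable (D : G.V → ℤ) : Prop := ∃ E, G.Effective E ∧ G.LinEquiv D E

/-- `D` has rank at least `r` : removing any `r` chips leaves a winnable divisor. -/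
def RankGE (D : G.V → ℤ) (r : ℕ) : Prop :=
  ∀ E : G.V → ℤ, G.Effective E → G.deg E = (r : ℤ) → G.Winnable (D - E)

/-- The Baker–Norine rank of a divisor. -/
noncomputable def rank (D : G.V → ℤ) : ℤ :=
  sSup (insert (-1) {r : ℤ | ∃ n : ℕ, r = (n : ℤ) ∧ G.RankGE D n})

/-- Degree as an additive group homomorphism. -/
noncomputable def degHom : (G.V → ℤ) →+ ℤ where
  toFun := G.deg
  map_zero' := by simp [deg]
  map_add' := fun a b => by simp [deg, Finset.sum_add_distrib]

/-- The Laplacian as an additive group homomorphism. -/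
noncomputable def lapHom : (G.V → ℤ) →+ (G.V → ℤ) where
  toFun := G.divOf
  map_zero' := by funext v; simp [divOf]
  map_add' := fun a b => by
    funext v
    simp only [divOf, Pi.add_apply, ← Finset.sum_add_distrib]
    exact Finset.sum_congr rfl fun e _ => by split_ifs <;> ring

/-- The Jacobian: degree-zero divisors modulo principal divisors. -/
noncomputable def Jac :=
  G.degHom.ker ⧸ (G.lapHom.range.addSubgroupOf G.degHom.ker)

noncomputable instance : AddCommGroup G.Jac :=
  QuotientAddGroup.Quotient.addCommGroup _

/-- Reachability using only edges from the set `S`. -/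
def ReachIn (S : Finset G.E) (u v : G.V) : Prop :=
  Relation.ReflTransGen
    (fun a b => ∃ e ∈ S, (G.s e = a ∧ G.t e = b) ∨ (G.s e = b ∧ G.t e = a)) u v

/-- Reachability avoiding the edges in `S`. -/
def ReachAvoid (S : Finset G.E) (u v : G.V) : Prop :=
  Relation.ReflTransGen
    (fun a b => ∃ e, e ∉ S ∧ ((G.s e = a ∧ G.t e = b) ∨ (G.s e = b ∧ G.t e = a))) u v

/-- A spanning tree: a set of edges connecting all vertices, with one fewer
edge than there are vertices. -/
def IsSpanningTree (T : Finset G.E) : Prop :=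
  (∀ u v : G.V, G.ReachIn T u v) ∧ T.card + 1 = Fintype.card G.V

end FinGraph

/-- A free double cover of finite graphs: a two-to-one local isomorphism
whose deck involution acts freely on vertices and edges. -/
structure FreeDoubleCover (Gt G : FinGraph) where
  vMap : Gt.V → G.V
  eMap : Gt.E → G.E
  invV : Gt.V → Gt.V
  invE : Gt.E → Gt.E
  invV_invV : ∀ v, invV (invV v) = v
  invE_invE : ∀ e, invE (invE e) = e
  invV_ne : ∀ v, invV v ≠ v
  invE_ne : ∀ e, invE e ≠ e
  vMap_invV : ∀ v, vMap (invV v) = vMap v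
  eMap_invE : ∀ e, eMap (invE e) = eMap e
  s_comm : ∀ e, vMap (Gt.s e) = G.s (eMap e)
  t_comm : ∀ e, vMap (Gt.t e) = G.t (eMap e)
  s_invE : ∀ e, Gt.s (invE e) = invV (Gt.s e)
  t_invE : ∀ e, Gt.t (invE e) = invV (Gt.t e)
  fiberV : ∀ a b : Gt.V, vMap a = vMap b → b = a ∨ b = invV a
  fiberE : ∀ a b : Gt.E, eMap a = eMap b → b = a ∨ b = invE a
  vMap_surj : Function.Surjective vMap
  eMap_surj : Function.Surjective eMap

/-!
Fix a vertex `q`, let `N` be the incidence matrix of `G` with the row of `q` deleted and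
`L = N Nᵀ` the reduced Laplacian. A degree-zero divisor is determined by its values off `q`, and
this identifies `Jac G` with `ℤ^(V∖q) ⧸ L ℤ^(V∖q)`, a group of order `|det L|` (Smith normal form).
Since `xᵀ L x = ‖Nᵀ x‖²` and `G` is connected, `det L ≠ 0`. By Cauchy–Binet `det L` is the sum of
the squared maximal minors of `N`. A minor whose columns form a spanning tree is `±1`, because
walking out from `q` along the tree writes every unit vector as a combination of its columns;
every other minor is `0`, since the indicator of a component of its edge set, shifted to vanish
at `q`, lies in its left kernel.
-/

open Finset Matrix

namespace Matrix

theorem natCard_quotient_range_toLin' {ι : Type*} [Fintype ι] [DecidableEq ι]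
    (A : Matrix ι ι ℤ) (hA : A.det ≠ 0) :
    Nat.card ((ι → ℤ) ⧸ LinearMap.range A.toLin') = A.det.natAbs := by
  have hinj : Function.Injective A.toLin' := by
    rw [← LinearMap.ker_eq_bot, Submodule.eq_bot_iff]
    by_contra! ⟨v, hv, hv0⟩
    exact hA (exists_mulVec_eq_zero_iff.mp ⟨v, hv0, hv⟩)
  rw [← Submodule.natAbs_det_equiv _ (LinearEquiv.ofInjective _ hinj).toAddEquiv,
    ← LinearMap.det_toLin' A]
  rfl

variable {m n R : Type*} [Fintype m] [Fintype n] [DecidableEq m] [CommRing R]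

theorem det_mul_eq_sum_det_submatrix_mul_prod (A : Matrix m n R) (B : Matrix n m R) :
    (A * B).det = ∑ r : m → n, (A.submatrix id r).det * ∏ i, B (r i) i := by
  simp only [det_apply', mul_apply, prod_univ_sum, Fintype.piFinset_univ, mul_sum, sum_mul,
    submatrix_apply, id]
  rw [sum_comm]
  refine sum_congr rfl fun r _ => sum_congr rfl fun σ _ => ?_
  rw [prod_mul_distrib, mul_assoc]

/-- Cauchy–Binet, summed over all (not only injective, increasing) column selections `r`:
each `k`-subset of columns is hit by `k!` injective maps `r`, all with the same product of
minors, and non-injective `r` contribute `0`. -/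
theorem sum_det_submatrix_mul_det_submatrix (A : Matrix m n R) (B : Matrix n m R) :
    ∑ r : m → n, (A.submatrix id r).det * (B.submatrix r id).det =
      (Fintype.card m).factorial * (A * B).det := by
  have hperm : ∀ σ : Equiv.Perm m, ∑ r : m → n,
      (A.submatrix id r).det * (Equiv.Perm.sign σ * ∏ i, B (r (σ i)) i) =
        ∑ r : m → n, (A.submatrix id r).det * ∏ i, B (r i) i := by
    intro σ
    refine Fintype.sum_equiv (Equiv.arrowCongr σ (Equiv.refl n)).symm _ _ fun r => ?_
    show _ = (A.submatrix id r |>.submatrix id σ).det * ∏ i, B (r (σ i)) i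
    rw [det_permute']
    ring
  have hB : ∀ r : m → n, (B.submatrix r id).det = ∑ σ : Equiv.Perm m,
      Equiv.Perm.sign σ * ∏ i, B (r (σ i)) i := fun r => det_apply' _
  simp only [hB, mul_sum]
  rw [sum_comm, sum_congr rfl fun σ _ => hperm σ, sum_const, card_univ, Fintype.card_perm,
    nsmul_eq_mul, det_mul_eq_sum_det_submatrix_mul_prod]

end Matrix

theorem Fintype.card_subtype_ne_add_one {α : Type*} [Fintype α] [DecidableEq α] (a : α) :
    Fintype.card {x // x ≠ a} + 1 = Fintype.card α := by
  rw [Fintype.card_subtype_compl, Fintype.card_subtype_eq]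
  have := Fintype.card_pos_iff.mpr ⟨a⟩
  omega

theorem Finset.card_filter_image_eq_factorial {ι κ : Type*} [Fintype ι] [DecidableEq ι]
    [Fintype κ] [DecidableEq κ] (T : Finset κ) (hT : #T = Fintype.card ι) :
    #{r : ι → κ | univ.image r = T} = (Fintype.card ι).factorial := by
  have hinj : Function.Injective fun (e : ι ≃ T) => Subtype.val ∘ e :=
    fun _ _ h => Equiv.ext fun i => Subtype.ext (congrFun h i)
  have hfilter : ({r : ι → κ | univ.image r = T} : Finset (ι → κ)) =
      univ.image fun (e : ι ≃ T) => Subtype.val ∘ e := by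
    ext r
    simp only [mem_filter, mem_univ, true_and, mem_image]
    constructor
    · rintro rfl
      let r' : ι → univ.image r := fun i => ⟨r i, mem_image_of_mem r (mem_univ i)⟩
      have hr' : Function.Surjective r' := by
        rintro ⟨x, hx⟩
        obtain ⟨i, -, rfl⟩ := mem_image.mp hx
        exact ⟨i, rfl⟩
      have hbij : Function.Bijective r' :=
        (Fintype.bijective_iff_surjective_and_card r').mpr ⟨hr', by rw [Fintype.card_coe, hT]⟩
      exact ⟨Equiv.ofBijective r' hbij, rfl⟩
    · rintro ⟨e, rfl⟩
      ext x
      simp only [mem_image, mem_univ, true_and]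
      exact ⟨fun ⟨i, hi⟩ => hi ▸ (e i).2, fun hx => ⟨e.symm ⟨x, hx⟩, by simp⟩⟩
  rw [hfilter, card_image_of_injective _ hinj, card_univ,
    Fintype.card_equiv (Fintype.equivOfCardEq (by simp [hT]))]

namespace FinGraph

variable (G : FinGraph)

theorem eq_of_reachIn {α : Type*} {S : Finset G.E} (f : G.V → α)
    (hf : ∀ e ∈ S, f (G.s e) = f (G.t e)) {u v : G.V} (h : G.ReachIn S u v) : f u = f v := by
  induction h with
  | refl => rfl
  | tail _ hstep ih =>
    obtain ⟨e, he, ⟨rfl, rfl⟩ | ⟨rfl, rfl⟩⟩ := hstep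
    · exact ih.trans (hf e he)
    · exact ih.trans (hf e he).symm

theorem reachIn_univ_of_reach {u v : G.V} (h : G.Reach u v) : G.ReachIn univ u v :=
  Relation.ReflTransGen.mono (fun _ _ ⟨e, he⟩ => ⟨e, mem_univ e, he⟩) _ _ h

theorem deg_divOf (f : G.V → ℤ) : G.deg (G.divOf f) = 0 := by
  simp only [deg, divOf]
  rw [sum_comm]
  refine sum_eq_zero fun e _ => ?_
  simp [sum_add_distrib, sum_ite_eq]

theorem divOf_sub_const (f : G.V → ℤ) (c : ℤ) : G.divOf (fun v => f v - c) = G.divOf f := by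
  funext v
  refine sum_congr rfl fun e _ => ?_
  split_ifs <;> ring

theorem divOf_neg (f : G.V → ℤ) : G.divOf (-f) = -G.divOf f := map_neg G.lapHom f

variable (q : G.V)

theorem deg_eq_add_sum_ne (D : G.V → ℤ) : G.deg D = D q + ∑ v : {v // v ≠ q}, D v := by
  rw [deg, Fintype.sum_eq_add_sum_compl q, sum_subtype (p := fun v => v ≠ q) _ (fun v => by simp)]

def extendZero (x : {v // v ≠ q} → ℤ) : G.V → ℤ := fun v => if h : v = q then 0 else x ⟨v, h⟩

@[simp] theorem extendZero_self (x : {v // v ≠ q} → ℤ) : G.extendZero q x q = 0 := dif_pos rfl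

theorem extendZero_restrict (f : G.V → ℤ) (hf : f q = 0) :
    G.extendZero q (fun v => f v) = f := by
  funext v
  by_cases h : v = q
  · simp [h, hf]
  · simp [extendZero, h]

theorem sum_mul_ite_eq_extendZero (x : {v // v ≠ q} → ℤ) (w : G.V) :
    ∑ u : {v // v ≠ q}, x u * (if w = u then 1 else 0) = G.extendZero q x w := by
  by_cases h : w = q
  · subst h
    simp [fun u : {v // v ≠ w} => u.2.symm]
  · rw [Fintype.sum_eq_single ⟨w, h⟩ fun u hu => by
      rw [if_neg fun hw => hu (Subtype.ext hw.symm), mul_zero]]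
    simp [extendZero, h]

def redIncidence : Matrix {v // v ≠ q} G.E ℤ :=
  fun v e => (if G.s e = v then 1 else 0) - (if G.t e = v then 1 else 0)

def redLaplacian : Matrix {v // v ≠ q} {v // v ≠ q} ℤ :=
  G.redIncidence q * (G.redIncidence q)ᵀ

theorem vecMul_redIncidence (x : {v // v ≠ q} → ℤ) (e : G.E) :
    (x ᵥ* G.redIncidence q) e = G.extendZero q x (G.s e) - G.extendZero q x (G.t e) := by
  simp only [vecMul, dotProduct, redIncidence, mul_sub, sum_sub_distrib,
    sum_mul_ite_eq_extendZero]

theorem redLaplacian_mulVec (x : {v // v ≠ q} → ℤ) :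
    G.redLaplacian q *ᵥ x = fun v : {v // v ≠ q} => -G.divOf (G.extendZero q x) v := by
  funext v
  rw [redLaplacian, ← mulVec_mulVec, mulVec_transpose, mulVec, dotProduct, divOf,
    ← sum_neg_distrib]
  refine sum_congr rfl fun e _ => ?_
  rw [vecMul_redIncidence, redIncidence]
  split_ifs <;> ring

@[simp] theorem extendZero_coe (x : {v // v ≠ q} → ℤ) (v : {v // v ≠ q}) :
    G.extendZero q x v = x v := dif_neg v.2

def restrictDegZero : G.degHom.ker →+ ({v // v ≠ q} → ℤ) where
  toFun D v := D.1 v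
  map_zero' := rfl
  map_add' _ _ := rfl

theorem restrictDegZero_bijective : Function.Bijective (G.restrictDegZero q) := by
  refine ⟨fun D D' h => Subtype.ext (funext fun v => ?_), fun x => ?_⟩
  · have h' : ∀ u : {v // v ≠ q}, D.1 u = D'.1 u := fun u => congrFun h u
    by_cases hv : v = q
    · have hD : G.deg D.1 = G.deg D'.1 := D.2.trans D'.2.symm
      rw [deg_eq_add_sum_ne G q, deg_eq_add_sum_ne G q, sum_congr rfl fun u _ => h' u] at hD
      rw [hv]
      exact add_right_cancel hD
    · exact h' ⟨v, hv⟩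
  · let D := Function.update (G.extendZero q x) q (-∑ u, x u)
    have hq : D q = -∑ u, x u := Function.update_self ..
    have hD : ∀ u : {v // v ≠ q}, D u = x u := fun u =>
      (Function.update_of_ne u.2 ..).trans (G.extendZero_coe q x u)
    refine ⟨⟨D, ?_⟩, funext hD⟩
    show G.deg D = 0
    rw [deg_eq_add_sum_ne G q, hq, sum_congr rfl fun u _ => hD u, neg_add_cancel]

noncomputable def degZeroEquiv : G.degHom.ker ≃+ ({v // v ≠ q} → ℤ) :=
  AddEquiv.ofBijective _ (G.restrictDegZero_bijective q)

theorem map_degZeroEquiv_principal_eq_range_redLaplacian :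
    (G.lapHom.range.addSubgroupOf G.degHom.ker).map (G.degZeroEquiv q : G.degHom.ker →+ _) =
      (LinearMap.range (G.redLaplacian q).toLin').toAddSubgroup := by
  ext x
  simp only [AddSubgroup.mem_map, AddSubgroup.mem_addSubgroupOf, AddMonoidHom.mem_range,
    Submodule.mem_toAddSubgroup, LinearMap.mem_range, toLin'_apply]
  constructor
  · rintro ⟨D, ⟨f, hf⟩, rfl⟩
    refine ⟨-fun v : {v // v ≠ q} => f v - f q, ?_⟩
    rw [mulVec_neg, redLaplacian_mulVec, extendZero_restrict _ _ (fun v => f v - f q) (sub_self _),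
      divOf_sub_const]
    funext v
    simp [degZeroEquiv, restrictDegZero, ← hf, lapHom]
  · rintro ⟨y, rfl⟩
    refine ⟨⟨G.lapHom (-G.extendZero q y), G.deg_divOf _⟩, ⟨_, rfl⟩, ?_⟩
    funext v
    simp [degZeroEquiv, restrictDegZero, redLaplacian_mulVec, lapHom, divOf_neg]

theorem natCard_jac_eq_natAbs_det (hL : (G.redLaplacian q).det ≠ 0) :
    Nat.card G.Jac = (G.redLaplacian q).det.natAbs :=
  (Nat.card_congr (QuotientAddGroup.congr _ _ _
      (G.map_degZeroEquiv_principal_eq_range_redLaplacian q)).toEquiv).trans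
    ((G.redLaplacian q).natCard_quotient_range_toLin' hL)

theorem det_redLaplacian_ne_zero (hG : G.Connected) : (G.redLaplacian q).det ≠ 0 := by
  intro h0
  obtain ⟨x, hx0, hx⟩ := exists_mulVec_eq_zero_iff.mpr h0
  have hflow : x ᵥ* G.redIncidence q = 0 := by
    rw [← dotProduct_self_eq_zero, ← dotProduct_mulVec, ← mulVec_transpose, mulVec_mulVec,
      ← redLaplacian, hx, dotProduct_zero]
  have hconst : ∀ e, G.extendZero q x (G.s e) = G.extendZero q x (G.t e) := fun e =>
    sub_eq_zero.mp ((G.vecMul_redIncidence q x e).symm.trans (congrFun hflow e))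
  refine hx0 (funext fun v => ?_)
  rw [← G.extendZero_coe q x v, ← G.eq_of_reachIn _ (fun e _ => hconst e)
    (G.reachIn_univ_of_reach (hG.2 q v)), extendZero_self, Pi.zero_apply]

section MaximalMinors

variable [DecidableEq G.E]

theorem isUnit_det_submatrix_redIncidence (r : {v // v ≠ q} → G.E)
    (hreach : ∀ w, G.ReachIn (univ.image r) q w) :
    IsUnit ((G.redIncidence q).submatrix id r).det := by
  set M := (G.redIncidence q).submatrix id r
  let δ : G.V → {v // v ≠ q} → ℤ := fun w u => if w = u then 1 else 0
  have hcol : ∀ j, M.col j = δ (G.s (r j)) - δ (G.t (r j)) := fun j => rfl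
  have hmem : ∀ j, M.col j ∈ LinearMap.range M.mulVecLin := fun j => by
    rw [range_mulVecLin]
    exact Submodule.subset_span ⟨j, rfl⟩
  have hδ : ∀ w, G.ReachIn (univ.image r) q w → δ w ∈ LinearMap.range M.mulVecLin := by
    intro w h
    induction h with
    | refl =>
      rw [show δ q = 0 from funext fun u => if_neg u.2.symm]
      exact zero_mem _
    | @tail a b _ hstep ih =>
      obtain ⟨e, he, hst⟩ := hstep
      obtain ⟨j, -, rfl⟩ := mem_image.mp he
      rcases hst with ⟨hs, ht⟩ | ⟨hs, ht⟩
      · rw [show δ b = δ a - M.col j by rw [hcol, hs, ht]; abel]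
        exact sub_mem ih (hmem j)
      · rw [show δ b = δ a + M.col j by rw [hcol, hs, ht]; abel]
        exact add_mem ih (hmem j)
  have hsurj : Function.Surjective M.mulVec := by
    rw [← coe_mulVecLin, ← LinearMap.range_eq_top, eq_top_iff, ← (Pi.basisFun ℤ _).span_eq,
      Submodule.span_le]
    rintro _ ⟨v, rfl⟩
    have hsingle : Pi.single v 1 = δ v := funext fun u => by
      simp [δ, Pi.single_apply, Subtype.ext_iff, eq_comm]
    rw [SetLike.mem_coe, Pi.basisFun_apply, hsingle]
    exact hδ v (hreach v)
  exact (isUnit_iff_isUnit_det _).mp (mulVec_surjective_iff_isUnit.mp hsurj)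

theorem det_submatrix_redIncidence_eq_zero (r : {v // v ≠ q} → G.E)
    (hdisconn : ¬ ∀ u v, G.ReachIn (univ.image r) u v) :
    ((G.redIncidence q).submatrix id r).det = 0 := by
  classical
  push Not at hdisconn
  obtain ⟨u, v, huv⟩ := hdisconn
  let f : G.V → ℤ := fun x => if G.ReachIn (univ.image r) u x then 1 else 0
  have hf : ∀ e ∈ univ.image r, f (G.s e) = f (G.t e) := fun e he => by
    have : G.ReachIn (univ.image r) u (G.s e) ↔ G.ReachIn (univ.image r) u (G.t e) :=
      ⟨fun h => h.tail ⟨e, he, Or.inl ⟨rfl, rfl⟩⟩, fun h => h.tail ⟨e, he, Or.inr ⟨rfl, rfl⟩⟩⟩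
    simp only [f, this]
  refine exists_vecMul_eq_zero_iff.mp ⟨fun x => f x - f q, fun hc => ?_, funext fun j => ?_⟩
  · have hfq : ∀ x, f x = f q := fun x => by
      by_cases hx : x = q
      · rw [hx]
      · exact sub_eq_zero.mp (congrFun hc ⟨x, hx⟩)
    have hu : f u = 1 := if_pos Relation.ReflTransGen.refl
    have hv : f v = 0 := if_neg huv
    have := (hfq u).trans (hfq v).symm
    omega
  · show ((fun x : {v // v ≠ q} => f x - f q) ᵥ* G.redIncidence q) (r j) = 0
    rw [vecMul_redIncidence, extendZero_restrict _ _ (fun x => f x - f q) (sub_self _)]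
    simp only [hf _ (mem_image_of_mem r (mem_univ j)), sub_self]

open Classical in
theorem det_submatrix_redIncidence_sq (r : {v // v ≠ q} → G.E) :
    ((G.redIncidence q).submatrix id r).det ^ 2 =
      if G.IsSpanningTree (univ.image r) then 1 else 0 := by
  split_ifs with hT
  · obtain h | h := Int.isUnit_iff.mp (G.isUnit_det_submatrix_redIncidence q r (hT.1 q))
    all_goals rw [h]; norm_num
  by_cases hreach : ∀ u v, G.ReachIn (univ.image r) u v
  · have hr : ¬ Function.Injective r := fun hinj => hT ⟨hreach, by
      rw [card_image_of_injective _ hinj, card_univ, Fintype.card_subtype_ne_add_one]⟩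
    obtain ⟨i, j, hij, hne⟩ := Function.not_injective_iff.mp hr
    rw [det_zero_of_column_eq hne fun k => by simp [hij], zero_pow two_ne_zero]
  · rw [G.det_submatrix_redIncidence_eq_zero q r hreach, zero_pow two_ne_zero]

open Classical in
theorem card_filter_isSpanningTree_image :
    #{r : {v // v ≠ q} → G.E | G.IsSpanningTree (univ.image r)} =
      #{T : Finset G.E | G.IsSpanningTree T} * (Fintype.card {v // v ≠ q}).factorial := by
  rw [card_eq_sum_card_fiberwise (f := fun r => univ.image r)
      (t := {T : Finset G.E | G.IsSpanningTree T}) fun r hr => by simpa using hr,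
    ← smul_eq_mul, ← sum_const]
  refine sum_congr rfl fun T hT => ?_
  have hTcard : #T = Fintype.card {v // v ≠ q} := by
    have := (mem_filter.mp hT).2.2
    have := Fintype.card_subtype_ne_add_one q
    omega
  rw [← card_filter_image_eq_factorial T hTcard, filter_filter]
  congr 1
  exact filter_congr fun r _ => ⟨And.right, fun h => ⟨h ▸ (mem_filter.mp hT).2, h⟩⟩

end MaximalMinors

theorem det_redLaplacian :
    (G.redLaplacian q).det = Nat.card {T : Finset G.E // G.IsSpanningTree T} := by
  classical
  have hminors := sum_det_submatrix_mul_det_submatrix (G.redIncidence q) (G.redIncidence q)ᵀ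
  simp only [← transpose_submatrix, det_transpose, ← sq, det_submatrix_redIncidence_sq,
    sum_boole] at hminors
  rw [card_filter_isSpanningTree_image, Nat.cast_mul, mul_comm, ← redLaplacian] at hminors
  rw [Nat.card_eq_fintype_card, Fintype.card_subtype]
  exact (mul_left_cancel₀ (Nat.cast_ne_zero.mpr (Nat.factorial_ne_zero _)) hminors).symm

end FinGraph

/-- The Jacobian of a finite connected graph is a finite abelian
group whose order is the number of spanning trees (matrix-tree theorem). -/
theorem jac_card_spanning_trees (G : FinGraph) (hG : G.Connected) :
    Finite G.Jac ∧
      Nat.card G.Jac = Nat.card {T : Finset G.E // G.IsSpanningTree T} := by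
  obtain ⟨q⟩ := hG.1
  have hL := G.det_redLaplacian_ne_zero q hG
  refine ⟨Nat.finite_of_card_ne_zero ?_, ?_⟩
  · rw [G.natCard_jac_eq_natAbs_det q hL]
    exact Int.natAbs_ne_zero.mpr hL
  · rw [G.natCard_jac_eq_natAbs_det q hL, G.det_redLaplacian q, Int.natAbs_natCast]
end

section
/- Let π : G̃ → G be a free double cover with involution ι, and suppose open edges E₁,…,E_d are removed from G so that the complement Γ' is relatively connected (the preimage under π of every connected component of Γ' is connected). Then d ≤ g - 1, where g is the genus of G. Moreover, every connected component of Γ' has genus 1 if and only if d = g - 1. -/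
/-! Every component `C` of `G ∖ S` has genus at least one: its preimage in `G̃` is connected and
has `2|V(C)|` vertices and `2|E(C)|` edges, so `2|V(C)| ≤ 2|E(C)| + 1`, i.e. `|V(C)| ≤ |E(C)|`.
Summing over the components gives `|V| ≤ |E| - |S|`, which is `|S| ≤ g - 1`, with equality
exactly when `|V(C)| = |E(C)|` for every component, i.e. when every component has genus one. -/

open Relation

theorem card_le_card_add_one_of_forall_reflTransGen {V E : Type*} [Finite E] (s t : E → V)
    (x₀ : V)
    (h : ∀ u, ReflTransGen (fun a b => ∃ e, (s e = a ∧ t e = b) ∨ (s e = b ∧ t e = a)) x₀ u) :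
    Nat.card V ≤ Nat.card E + 1 := by
  let H := SimpleGraph.fromRel fun a b => ∃ e, s e = a ∧ t e = b
  have hreach : ∀ u, H.Reachable x₀ u := fun u => by
    rw [SimpleGraph.reachable_iff_reflTransGen]
    refine (h u).lift' id fun a b ⟨e, hab⟩ => ?_
    by_cases hne : a = b
    · exact hne ▸ .refl
    · exact .single ⟨hne, hab.imp (⟨e, ·⟩) fun h => ⟨e, h⟩⟩
  have : Nonempty V := ⟨x₀⟩
  have hconn : H.Connected := ⟨fun u v => (hreach u).symm.trans (hreach v)⟩
  have hedges : H.edgeSet ⊆ Set.range fun e => s(s e, t e) := by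
    rintro ⟨a, b⟩ ⟨-, ⟨e, rfl, rfl⟩ | ⟨e, rfl, rfl⟩⟩
    · exact ⟨e, rfl⟩
    · exact ⟨e, Sym2.eq_swap⟩
  calc Nat.card V ≤ Nat.card H.edgeSet + 1 := hconn.card_vert_le_card_edgeSet_add_one
    _ ≤ Nat.card E + 1 := by
      gcongr
      exact (Nat.card_mono (Set.finite_range _) hedges).trans (Finite.card_range_le _)

theorem Nat.card_subtype_comp_eq_two_mul {A B : Type*} [Finite A] {f : A → B} {ι : A → A}
    (hι : ∀ a, ι a ≠ a) (hfι : ∀ a, f (ι a) = f a) (hfib : ∀ a b, f a = f b → b = a ∨ b = ι a)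
    (hsurj : Function.Surjective f) (p : B → Prop) :
    Nat.card {a // p (f a)} = 2 * Nat.card {b // p b} := by
  have hfiber : ∀ b, Nat.card {a // f a = b} = 2 := fun b => by
    obtain ⟨a, rfl⟩ := hsurj b
    have : {a' | f a' = f a} = {a, ι a} := by
      ext a'
      refine ⟨fun h => (hfib a a' h.symm).imp id id, ?_⟩
      rintro (rfl | rfl)
      exacts [rfl, hfι a]
    rw [← Set.ncard_pair (hι a).symm, ← this, ← Nat.card_coe_set_eq]; rfl
  have := Finite.of_surjective f hsurj
  have := Fintype.ofFinite {b // p b}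
  calc Nat.card {a // p (f a)}
      = Nat.card (Σ b : {b // p b}, {a // f a = b}) :=
        Nat.card_congr
          { toFun a := ⟨⟨f a, a.2⟩, a.1, rfl⟩
            invFun x := ⟨x.2.1, by rw [x.2.2]; exact x.1.2⟩
            left_inv _ := rfl
            right_inv := by rintro ⟨⟨b, _⟩, a, h : f a = b⟩; subst h; rfl }
    _ = 2 * Nat.card {b // p b} := by
      rw [Nat.card_sigma, Finset.sum_congr rfl fun b _ => hfiber b.1, Finset.sum_const,
        smul_eq_mul, Finset.card_univ, Nat.card_eq_fintype_card, mul_comm]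

theorem Nat.card_eq_sum_card_fiber {α β : Type*} [Finite α] [Fintype β] (f : α → β) :
    Nat.card α = ∑ b, Nat.card {a // f a = b} :=
  (Nat.card_congr (Equiv.sigmaFiberEquiv f)).symm.trans Nat.card_sigma

theorem Relation.ReflTransGen.exists_subtype {α : Type*} {r : α → α → Prop} {P : α → Prop}
    (hP : ∀ a b, r a b → P a → P b) {a b : α} (h : ReflTransGen r a b) (ha : P a) :
    ∃ hb : P b, ReflTransGen (fun x y : Subtype P => r x y) ⟨a, ha⟩ ⟨b, hb⟩ := by
  induction h with
  | refl => exact ⟨ha, .refl⟩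
  | tail _ hbc ih =>
    obtain ⟨hb, h⟩ := ih
    exact ⟨hP _ _ hbc hb, h.tail hbc⟩

namespace FinGraph

variable (G : FinGraph) (S : Finset G.E)

theorem reachAvoid_symm {u v : G.V} (h : G.ReachAvoid S u v) : G.ReachAvoid S v u :=
  ReflTransGen.mono (fun _ _ ⟨e, he, hab⟩ => ⟨e, he, hab.symm⟩) _ _ (reflTransGen_swap.2 h)

def avoidSetoid : Setoid G.V where
  r := G.ReachAvoid S
  iseqv := ⟨fun _ => .refl, G.reachAvoid_symm S, .trans⟩

abbrev AvoidComponent : Type := Quotient (G.avoidSetoid S)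

theorem reachAvoid_out_mk_iff {v u : G.V} :
    G.ReachAvoid S (Quotient.mk (G.avoidSetoid S) v).out u ↔ G.ReachAvoid S v u :=
  ⟨(G.reachAvoid_symm S (Quotient.mk_out (s := G.avoidSetoid S) v)).trans,
    (Quotient.mk_out (s := G.avoidSetoid S) v).trans⟩

theorem card_eq_sum_card_reachAvoid {α : Type*} [Finite α]
    [Fintype (G.AvoidComponent S)] (f : α → G.V) :
    Nat.card α = ∑ q : G.AvoidComponent S, Nat.card {a // G.ReachAvoid S q.out (f a)} :=
  (Nat.card_eq_sum_card_fiber fun a => Quotient.mk _ (f a)).trans <|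
    Finset.sum_congr rfl fun _ _ => Nat.card_congr <| Equiv.subtypeEquivRight fun _ =>
      Quotient.mk_eq_iff_out.trans ⟨G.reachAvoid_symm S, G.reachAvoid_symm S⟩

theorem card_eq_card_add_sum_card_reachAvoid [Fintype (G.AvoidComponent S)] :
    Fintype.card G.E = S.card +
      ∑ q : G.AvoidComponent S, Nat.card {e // e ∉ S ∧ G.ReachAvoid S q.out (G.s e)} := by
  classical
  have hcompl : Nat.card {e // e ∉ S} + S.card = Fintype.card G.E := by
    rw [Nat.card_eq_fintype_card, Fintype.card_subtype_compl, Fintype.card_coe]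
    exact Nat.sub_add_cancel S.card_le_univ
  rw [← hcompl, add_comm, G.card_eq_sum_card_reachAvoid S fun e : {e // e ∉ S} => G.s e]
  exact congrArg _ <| Finset.sum_congr rfl fun q _ => Nat.card_congr <|
    Equiv.subtypeSubtypeEquivSubtypeInter (· ∉ S) fun e => G.ReachAvoid S q.out (G.s e)

end FinGraph

namespace FreeDoubleCover

variable {Gt G : FinGraph} (c : FreeDoubleCover Gt G) (S : Finset G.E)

def AdjAvoid (a b : Gt.V) : Prop :=
  ∃ e, c.eMap e ∉ S ∧ ((Gt.s e = a ∧ Gt.t e = b) ∨ (Gt.s e = b ∧ Gt.t e = a))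

/-- `G ∖ S` is relatively connected: the preimage of each of its components is connected. -/
def RelConnected : Prop :=
  ∀ x y, G.ReachAvoid S (c.vMap x) (c.vMap y) → ReflTransGen (c.AdjAvoid S) x y

theorem reachAvoid_vMap_of_adjAvoid {a b : Gt.V} (h : c.AdjAvoid S a b) :
    G.ReachAvoid S (c.vMap a) (c.vMap b) := by
  obtain ⟨e, he, hab⟩ := h
  refine .single ⟨c.eMap e, he, ?_⟩
  rw [← c.s_comm, ← c.t_comm]
  rcases hab with ⟨rfl, rfl⟩ | ⟨rfl, rfl⟩
  exacts [.inl ⟨rfl, rfl⟩, .inr ⟨rfl, rfl⟩]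

theorem card_reachAvoid_le_card_of_relConnected (hrel : c.RelConnected S) (v : G.V) :
    Nat.card {u // G.ReachAvoid S v u} ≤ Nat.card {e // e ∉ S ∧ G.ReachAvoid S v (G.s e)} := by
  obtain ⟨x₀, rfl⟩ := c.vMap_surj v
  let P (x : Gt.V) : Prop := G.ReachAvoid S (c.vMap x₀) (c.vMap x)
  have hP (a b : Gt.V) (hab : c.AdjAvoid S a b) (ha : P a) : P b :=
    ha.trans (c.reachAvoid_vMap_of_adjAvoid S hab)
  let F := {e : Gt.E // c.eMap e ∉ S ∧ G.ReachAvoid S (c.vMap x₀) (G.s (c.eMap e))}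
  have hsrc (e : F) : P (Gt.s e.1) := by simpa only [P, c.s_comm] using e.2.2
  let src (e : F) : Subtype P := ⟨Gt.s e.1, hsrc e⟩
  let tgt (e : F) : Subtype P := ⟨Gt.t e.1, hP _ _ ⟨e.1, e.2.1, .inl ⟨rfl, rfl⟩⟩ (hsrc e)⟩
  have hconn (u : Subtype P) : ReflTransGen
      (fun a b => ∃ e, (src e = a ∧ tgt e = b) ∨ (src e = b ∧ tgt e = a)) ⟨x₀, .refl⟩ u := by
    obtain ⟨_, hpath⟩ := (hrel x₀ u.1 u.2).exists_subtype hP .refl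
    refine ReflTransGen.mono ?_ _ _ hpath
    rintro ⟨a, ha⟩ ⟨b, hb⟩ ⟨e, he, ⟨rfl, rfl⟩ | ⟨rfl, rfl⟩⟩
    · exact ⟨⟨e, he, by rw [← c.s_comm]; exact ha⟩, .inl ⟨rfl, rfl⟩⟩
    · exact ⟨⟨e, he, by rw [← c.s_comm]; exact hb⟩, .inr ⟨rfl, rfl⟩⟩
  have hV : Nat.card (Subtype P) = 2 * Nat.card {u // G.ReachAvoid S (c.vMap x₀) u} :=
    Nat.card_subtype_comp_eq_two_mul c.invV_ne c.vMap_invV c.fiberV c.vMap_surj _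
  have hE : Nat.card F =
      2 * Nat.card {e // e ∉ S ∧ G.ReachAvoid S (c.vMap x₀) (G.s e)} :=
    Nat.card_subtype_comp_eq_two_mul c.invE_ne c.eMap_invE c.fiberE c.eMap_surj
      fun e => e ∉ S ∧ G.ReachAvoid S (c.vMap x₀) (G.s e)
  have htree := card_le_card_add_one_of_forall_reflTransGen src tgt _ hconn
  omega

end FreeDoubleCover

theorem relatively_connected_bound_general (Gt G : FinGraph) (c : FreeDoubleCover Gt G)
    (S : Finset G.E)
    (g : ℤ) (hg : g = (Fintype.card G.E : ℤ) - (Fintype.card G.V : ℤ) + 1)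
    (hrel : ∀ x y : Gt.V, G.ReachAvoid S (c.vMap x) (c.vMap y) →
      Relation.ReflTransGen
        (fun a b => ∃ e : Gt.E, c.eMap e ∉ S ∧
          ((Gt.s e = a ∧ Gt.t e = b) ∨ (Gt.s e = b ∧ Gt.t e = a))) x y) :
    (S.card : ℤ) ≤ g - 1 ∧
    ((∀ v : G.V,
        (Nat.card {e : G.E // e ∉ S ∧ G.ReachAvoid S v (G.s e)} : ℤ) -
          (Nat.card {u : G.V // G.ReachAvoid S v u} : ℤ) + 1 = 1) ↔
      (S.card : ℤ) = g - 1) := by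
  have := Fintype.ofFinite (G.AvoidComponent S)
  set nV : G.V → ℕ := fun v => Nat.card {u // G.ReachAvoid S v u}
  set nE : G.V → ℕ := fun v => Nat.card {e // e ∉ S ∧ G.ReachAvoid S v (G.s e)}
  have hle (v : G.V) : nV v ≤ nE v := c.card_reachAvoid_le_card_of_relConnected S hrel v
  have hV : Fintype.card G.V = ∑ q : G.AvoidComponent S, nV q.out := by
    rw [← Nat.card_eq_fintype_card]
    exact G.card_eq_sum_card_reachAvoid S id
  have hE : Fintype.card G.E = S.card + ∑ q : G.AvoidComponent S, nE q.out :=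
    G.card_eq_card_add_sum_card_reachAvoid S
  have hsum : ∑ q : G.AvoidComponent S, nV q.out ≤ ∑ q : G.AvoidComponent S, nE q.out :=
    Finset.sum_le_sum fun q _ => hle q.out
  have heq : (∀ v, nV v = nE v) ↔
      ∑ q : G.AvoidComponent S, nV q.out = ∑ q : G.AvoidComponent S, nE q.out := by
    rw [Finset.sum_eq_sum_iff_of_le fun q _ => hle q.out]
    refine ⟨fun h q _ => h q.out, fun h v => ?_⟩
    simpa only [nV, nE, G.reachAvoid_out_mk_iff] using h (Quotient.mk _ v) (Finset.mem_univ _)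
  have hgenus (v : G.V) : (nE v : ℤ) - nV v + 1 = 1 ↔ nV v = nE v := by omega
  subst hg
  refine ⟨by omega, (forall_congr' hgenus).trans (heq.trans ⟨fun h => by omega, fun h => by omega⟩)⟩

/-- Let `π : G̃ → G` be a free double cover and remove the edges
of `S` from `G` so that the complement `Γ'` is relatively connected (the
preimage of each connected component of `Γ'` is connected).  Then
`|S| ≤ g - 1`, and every connected component of `Γ'` has genus `1` iff
`|S| = g - 1`. -/
theorem relatively_connected_bound (Gt G : FinGraph) (c : FreeDoubleCover Gt G)
    (hG : G.Connected) (hGt : Gt.Connected) (S : Finset G.E)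
    (g : ℤ) (hg : g = (Fintype.card G.E : ℤ) - (Fintype.card G.V : ℤ) + 1)
    (hrel : ∀ x y : Gt.V, G.ReachAvoid S (c.vMap x) (c.vMap y) →
      Relation.ReflTransGen
        (fun a b => ∃ e : Gt.E, c.eMap e ∉ S ∧
          ((Gt.s e = a ∧ Gt.t e = b) ∨ (Gt.s e = b ∧ Gt.t e = a))) x y) :
    (S.card : ℤ) ≤ g - 1 ∧
    ((∀ v : G.V,
        (Nat.card {e : G.E // e ∉ S ∧ G.ReachAvoid S v (G.s e)} : ℤ) -
          (Nat.card {u : G.V // G.ReachAvoid S v u} : ℤ) + 1 = 1) ↔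
      (S.card : ℤ) = g - 1) :=
  relatively_connected_bound_general Gt G c S g hg hrel
end
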